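/- Suppose P ⊆ (2^ℕ)^ω is a perfect product, ξ: (2^ℕ)^ω → 2^ℕ is continuous, and E is the equivalence relation x E y iff ξ(x) = ξ(y). Suppose U' ⊆ U ⊆ ω, E is reduced to U on Z = A ∪ B where A, B ⊆ P are perfect products with A ↾ U = B ↾ U, and E is reduced to U' on A. Then E is reduced to U' on Z. -/
import Mathlib


/-- Cantor space `2^ℕ`. -/
abbrev Cantor := ℕ → Bool

/-- A perfect subset of Cantor space: nonempty, closed, no isolated points. -/
def PerfectSet (X : Set Cantor) : Prop := X.Nonempty ∧ Perfect X

/-- The length of the stem of `X`: the length of the longest finite binary string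
that is an initial segment of every element of `X`. -/
noncomputable def stemLen (X : Set Cantor) : ℕ :=
  sSup {n | ∀ x ∈ X, ∀ y ∈ X, ∀ i < n, x i = y i}

/-- Simple splitting piece `X^i = {x ∈ X | x(|stem X|) = i}`. -/
noncomputable def splitPiece (X : Set Cantor) (i : Bool) : Set Cantor :=
  {x ∈ X | x (stemLen X) = i}

/-- Iterated simple splitting `X_s`: `X_Λ = X`, `X_{s⌢i} = (X_s)^i`. -/
noncomputable def iterSplit (X : Set Cantor) (s : List Bool) : Set Cantor :=
  s.foldl splitPiece X

/-- Refinement `X ≤ₙ Y`: `X_s ⊆ Y_s` for every binary string `s` of length `n`. -/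
def refines (n : ℕ) (X Y : Set Cantor) : Prop :=
  ∀ s : List Bool, s.length = n → iterSplit X s ⊆ iterSplit Y s

/-- The perfect product `∏_k P(k) ⊆ (2^ℕ)^ω` determined by coordinatewise sets. -/
def prodSet (P : ℕ → Set Cantor) : Set (ℕ → Cantor) := {x | ∀ k, x k ∈ P k}

/-- `P` is a perfect product (given by its coordinates `P k`). -/
def PerfectProduct (P : ℕ → Set Cantor) : Prop := ∀ k, PerfectSet (P k)

/-- `q(m,j) = |{k < m : φ(k) = j}|`. -/
def qcount (phi : ℕ → ℕ) (m j : ℕ) : ℕ :=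
  ((Finset.range m).filter fun k => phi k = j).card

/-- `σ/j`: the substring of `σ` read along the positions `k < |σ|` with `φ(k) = j`. -/
def subAlong (phi : ℕ → ℕ) (j : ℕ) (σ : List Bool) : List Bool :=
  ((List.range σ.length).filter fun k => phi k = j).map fun k => σ.getD k false

/-- The split piece `P_σ` of a perfect product, coordinatewise: `P_σ(j) = (P(j))_{σ/j}`. -/
noncomputable def prodSplit (phi : ℕ → ℕ) (P : ℕ → Set Cantor) (σ : List Bool) :
    ℕ → Set Cantor :=
  fun j => iterSplit (P j) (subAlong phi j σ)

/-- Refinement of perfect products: `P ≤ₘ Q` iff `P(j) ≤_{q(m,j)} Q(j)` for all `j`. -/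
def prodRef (phi : ℕ → ℕ) (m : ℕ) (P Q : ℕ → Set Cantor) : Prop :=
  ∀ j, refines (qcount phi m j) (P j) (Q j)

/-- `D(σ,τ) = ω \ {φ(i) : i < m, σ(i) ≠ τ(i)}` (for strings of length `m`). -/
def Dset (phi : ℕ → ℕ) (m : ℕ) (σ τ : List Bool) : Set ℕ :=
  {j | ¬ ∃ i < m, σ.getD i false ≠ τ.getD i false ∧ phi i = j}

/-- `E` (induced by `ξ`) is reduced to `V ⊆ ω` on `S`. -/
def reducedTo (ξ : (ℕ → Cantor) → Cantor) (V : Set ℕ) (S : Set (ℕ → Cantor)) : Prop :=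
  ∀ x ∈ S, ∀ y ∈ S, (∀ k ∈ V, x k = y k) → ξ x = ξ y

/-- if `E` is reduced to `U` on `Z = A ∪ B` where the perfect
products `A, B ⊆ P` satisfy `A ↾ U = B ↾ U`, and `E` is reduced to `U' ⊆ U` on
`A`, then `E` is reduced to `U'` on `Z`. -/
theorem stmt16 (P A B : ℕ → Set Cantor) (hP : PerfectProduct P)
    (hA : PerfectProduct A) (hB : PerfectProduct B)
    (hAP : ∀ j, A j ⊆ P j) (hBP : ∀ j, B j ⊆ P j)
    (ξ : (ℕ → Cantor) → Cantor) (hξ : Continuous ξ)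
    (U' U : Set ℕ) (hUU : U' ⊆ U)
    (hagree : U.restrict '' prodSet A = U.restrict '' prodSet B)
    (hU : reducedTo ξ U (prodSet A ∪ prodSet B))
    (hU' : reducedTo ξ U' (prodSet A)) :
    reducedTo ξ U' (prodSet A ∪ prodSet B) := by
  intro x hx y hy hxy
  have key : ∀ z ∈ prodSet A ∪ prodSet B, ∃ a ∈ prodSet A,
      (∀ k ∈ U, a k = z k) ∧ ξ a = ξ z := by
    intro z hz
    rcases hz with hz | hz
    · exact ⟨z, hz, fun k _ => rfl, rfl⟩
    · have : U.restrict z ∈ U.restrict '' prodSet B := ⟨z, hz, rfl⟩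
      rw [← hagree] at this
      rcases this with ⟨a, haA, hres⟩
      have hk : ∀ k ∈ U, a k = z k := fun k hk =>
        congrFun hres ⟨k, hk⟩
      exact ⟨a, haA, hk, hU a (Or.inl haA) z (Or.inr hz) hk⟩
  obtain ⟨ax, haxA, haxU, haxξ⟩ := key x hx
  obtain ⟨ay, hayA, hayU, hayξ⟩ := key y hy
  have : ξ ax = ξ ay := by
    apply hU' ax haxA ay hayA
    intro k hk
    rw [haxU k (hUU hk), hayU k (hUU hk), hxy k hk]
  rw [← haxξ, ← hayξ, this]
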